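/- Let K be a compact connected Hausdorff space (a continuum), let X be a proper subset of K, and let X' be a connected component of X. Then the closure of X' meets the closure of K \ X. -/
import Mathlib

open Set

/-- In a compact Hausdorff space, any open set containing the connected component of `x`
contains a clopen set containing `x`. -/
lemma exists_isClopen_subset_of_connectedComponent_subset
    {Y : Type*} [TopologicalSpace Y] [CompactSpace Y] [T2Space Y] {x : Y} {U : Set Y}
    (hU : IsOpen U) (h : connectedComponent x ⊆ U) :
    ∃ Z : Set Y, IsClopen Z ∧ x ∈ Z ∧ Z ⊆ U := by
  let N := { s : Set Y // IsClopen s ∧ x ∈ s }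
  haveI : Nonempty N := ⟨⟨univ, isClopen_univ, mem_univ x⟩⟩
  have hNcl : ∀ s : N, IsClosed s.val := fun s => s.property.1.1
  have hdir : Directed (· ⊇ ·) fun s : N => s.val := by
    rintro ⟨s, hs, hxs⟩ ⟨t, ht, hxt⟩
    exact ⟨⟨s ∩ t, hs.inter ht, ⟨hxs, hxt⟩⟩, inter_subset_left, inter_subset_right⟩
  have hx : (⋂ s : N, s.val) ⊆ U := by
    rw [← connectedComponent_eq_iInter_isClopen]; exact h
  obtain ⟨⟨Z, hZ, hxZ⟩, hZU⟩ :=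
    exists_subset_nhds_of_compactSpace hdir hNcl (fun y hy => hU.mem_nhds (hx hy))
  exact ⟨Z, hZ, hxZ, hZU⟩

/-- Core boundary bumping: a component of a proper closed subset of a connected compact
Hausdorff space meets the closure of the complement. -/
lemma core_bumping {K : Type*} [TopologicalSpace K] [CompactSpace K]
    [ConnectedSpace K] [T2Space K] {F : Set K} (hF : IsClosed F) (hFp : Fᶜ.Nonempty)
    {x : K} (hx : x ∈ F) :
    (connectedComponentIn F x ∩ closure Fᶜ).Nonempty := by
  by_contra hcon
  rw [not_nonempty_iff_eq_empty, ← disjoint_iff_inter_eq_empty] at hcon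
  have hCint : connectedComponentIn F x ⊆ interior F := by
    intro y hy
    have h1 : y ∉ closure Fᶜ := fun hyc => hcon.ne_of_mem hy hyc rfl
    rw [closure_compl] at h1
    simpa using h1
  -- pass to the subtype F
  haveI : CompactSpace F := isCompact_iff_compactSpace.mp hF.isCompact
  have himg : connectedComponentIn F x = (↑) '' connectedComponent (⟨x, hx⟩ : F) :=
    connectedComponentIn_eq_image hx
  have hUopen : IsOpen (((↑) : F → K) ⁻¹' interior F) :=
    isOpen_interior.preimage continuous_subtype_val
  have hsub : connectedComponent (⟨x, hx⟩ : F) ⊆ ((↑) : F → K) ⁻¹' interior F := by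
    intro z hz
    exact hCint (himg ▸ mem_image_of_mem _ hz)
  obtain ⟨Z, hZ, hxZ, hZU⟩ :=
    exists_isClopen_subset_of_connectedComponent_subset hUopen hsub
  -- V := image of Z in K is clopen
  set V : Set K := ((↑) : F → K) '' Z with hV
  have hVF : V ⊆ F := by rintro _ ⟨z, _, rfl⟩; exact z.2
  have hVint : V ⊆ interior F := by rintro _ ⟨z, hz, rfl⟩; exact hZU hz
  have hVclosed : IsClosed V := by
    have : IsCompact V := (hZ.1.isCompact.image continuous_subtype_val)
    exact this.isClosed
  have hVopen : IsOpen V := by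
    obtain ⟨W, hW, hZW⟩ := hZ.2
    have : V = W ∩ interior F := by
      apply Subset.antisymm
      · rintro _ ⟨z, hz, rfl⟩
        refine ⟨?_, hVint ⟨z, hz, rfl⟩⟩
        have := hZW ▸ hz
        exact this
      · rintro y ⟨hyW, hyI⟩
        have hyF : y ∈ F := interior_subset hyI
        refine ⟨⟨y, hyF⟩, ?_, rfl⟩
        rw [← hZW] at *
        exact hyW
    rw [this]
    exact hW.inter isOpen_interior
  have hclopen : IsClopen V := ⟨hVclosed, hVopen⟩
  rcases isClopen_iff.mp hclopen with h0 | h1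
  · have hxV : x ∈ V := ⟨⟨x, hx⟩, hxZ, rfl⟩
    rw [h0] at hxV
    exact hxV
  · obtain ⟨p, hp⟩ := hFp
    exact hp (hVF (h1 ▸ mem_univ p))

theorem boundary_bumping {K : Type*} [TopologicalSpace K] [CompactSpace K]
    [ConnectedSpace K] [T2Space K] (X : Set K) (hX : X ≠ Set.univ)
    (X' : Set K) (x : K) (hx : x ∈ X) (hX' : X' = connectedComponentIn X x) :
    (closure X' ∩ closure Xᶜ).Nonempty := by
  by_contra hcon
  rw [not_nonempty_iff_eq_empty, ← disjoint_iff_inter_eq_empty] at hcon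
  subst hX'
  set C := connectedComponentIn X x with hC
  have hCconn : IsPreconnected C := isPreconnected_connectedComponentIn
  have hCx : x ∈ C := mem_connectedComponentIn hx
  -- closure C ⊆ X
  have hclX : closure C ⊆ X := by
    intro y hy
    by_contra hyX
    exact hcon.ne_of_mem hy (subset_closure hyX) rfl
  -- maximality : closure C ⊆ C, so C is closed
  have hclC : closure C ⊆ C :=
    (hCconn.closure).subset_connectedComponentIn (subset_closure hCx) hclX
  have hCclosed : IsClosed C := by
    rw [← closure_subset_iff_isClosed]; exact hclC
  have hCc : closure C = C := hCclosed.closure_eq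
  rw [hCc] at hcon
  -- separate C from closure Xᶜ
  have hGc : IsClosed (closure Xᶜ) := isClosed_closure
  obtain ⟨u, v, hu, hv, hCu, hGv, huv⟩ := normal_separation hCclosed hGc hcon
  set F : Set K := closure u with hF
  have hclu : closure u ⊆ vᶜ :=
    closure_minimal huv.subset_compl_right hv.isClosed_compl
  have hFX : F ⊆ X := by
    intro y hy
    by_contra hyX
    exact hclu hy (hGv (subset_closure hyX))
  have hxF : x ∈ F := subset_closure (hCu hCx)
  obtain ⟨p, hp⟩ := (Set.ne_univ_iff_exists_notMem X).mp hX
  have hFp : Fᶜ.Nonempty := ⟨p, fun h => hp (hFX h)⟩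
  obtain ⟨y, hyC, hyFc⟩ := core_bumping isClosed_closure hFp hxF
  -- the component of x in F is contained in C, hence in u
  have hsub : connectedComponentIn F x ⊆ C :=
    isPreconnected_connectedComponentIn.subset_connectedComponentIn
      (mem_connectedComponentIn hxF) ((connectedComponentIn_subset F x).trans hFX)
  have hyu : y ∈ u := hCu (hsub hyC)
  -- but closure Fᶜ is disjoint from u
  have : closure Fᶜ ⊆ uᶜ := by
    rw [← isClosed_compl_iff.mpr hu |>.closure_eq]
    exact closure_mono (compl_subset_compl.mpr subset_closure)
  exact this hyFc hyu
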